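/- Let r ≥ 1, t ∈ [r], and let f : 𝔽₂^r → {−1,1} be a Boolean function such that: f̂(e_j) ≠ 0 for every j ∈ [r]; Fdim(f^{(j)}) ≤ r − t for every j ∈ {2,…,t}; the Fourier support of f^{(1)} is contained in span{e_{t+1},…,e_r}; and the Fourier coefficient of f^{(1)} at e_ℓ is nonzero for every ℓ ∈ {t+1,…,r}. Then for every i ∈ {2,…,t}, the Fourier support of f^{(i)} is contained in span{e₁, e_{t+1},…,e_r}; in particular f^{(i)} does not depend on the variables x₂,…,x_t. -/

import Mathlib

/-- The Fourier coefficient of `f : 𝔽₂ⁿ → ℝ` at `S ∈ 𝔽₂ⁿ`. -/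
noncomputable def fCoeff {n : ℕ} (f : (Fin n → ZMod 2) → ℝ) (S : Fin n → ZMod 2) : ℝ :=
  (1 / 2 ^ n) * ∑ x : Fin n → ZMod 2, f x * (-1 : ℝ) ^ (∑ i, (S i).val * (x i).val)

/-- The Fourier support of `f`. -/
noncomputable def fSupp {n : ℕ} (f : (Fin n → ZMod 2) → ℝ) : Set (Fin n → ZMod 2) :=
  {S | fCoeff f S ≠ 0}

/-- The `j`-th standard basis vector of `𝔽₂ⁿ`. -/
def stdBasis {n : ℕ} (j : Fin n) : Fin n → ZMod 2 :=
  fun i => if i = j then 1 else 0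

/-- The restriction `g^{(i)}` of `g`, fixing `x_i = b` where `b ∈ {0,1}` is chosen so that
`(−1)^b·ĝ(e_i) = |ĝ(e_i)|` (and `b = 0` if `ĝ(e_i) = 0`). -/
noncomputable def restrictAt {n : ℕ} (g : (Fin n → ZMod 2) → ℝ) (i : Fin n) :
    (Fin n → ZMod 2) → ℝ :=
  fun x => g (Function.update x i (if fCoeff g (stdBasis i) < 0 then 1 else 0))

/-!
Fixing `x_i = b` sends the Fourier coefficient at `S` with `S_i = 0` to
`ĝ(S) + (-1)^b ĝ(S + e_i)`. Comparing the restrictions at the coordinates `1` and `i` at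
`S = e_ℓ` for `ℓ > t`, the hypotheses on `f^{(1)}` force `e_ℓ` or `e_ℓ + e_1` into the Fourier
support of `f^{(i)}`. These `r - t` vectors are linearly independent and lie in
`span{e_1, e_{t+1}, …, e_r}`, so `Fdim f^{(i)} ≤ r - t` makes them span `Fspan f^{(i)}`.
By Fourier inversion, a function whose spectrum vanishes at a set of coordinates does not
depend on them.
-/

open Finset Function Submodule Module

lemma sum_eq_sum_of_add_comp_eq {α : Type*} [Fintype α] (σ : α ≃ α) {F G : α → ℝ}
    (h : ∀ x, F x + F (σ x) = G x + G (σ x)) : ∑ x, F x = ∑ x, G x := by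
  have hsum := sum_congr rfl fun x (_ : x ∈ univ) => h x
  rw [sum_add_distrib, sum_add_distrib, σ.sum_comp F, σ.sum_comp G] at hsum
  linarith

lemma apply_eq_zero_of_mem_span {K κ : Type*} [Semiring K] {W : Set (κ → K)} {j : κ}
    (hW : ∀ w ∈ W, w j = 0) {v : κ → K} (hv : v ∈ span K W) : v j = 0 :=
  span_le (p := LinearMap.ker (LinearMap.proj j)).2 hW hv

lemma linearIndependent_of_apply_eq_ite {K ι κ : Type*} [Semiring K] [DecidableEq ι]
    {v : ι → κ → K} (c : ι → κ) (h : ∀ a b, v a (c b) = if b = a then 1 else 0) :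
    LinearIndependent K v := by
  refine LinearIndependent.of_comp (LinearMap.funLeft K K c) ?_
  convert Pi.linearIndependent_single_one ι K with a
  ext b
  simp [LinearMap.funLeft, h, Pi.single_apply]

lemma subset_span_range_of_finrank_le {K V ι : Type*} [DivisionRing K] [AddCommGroup V]
    [Module K V] [FiniteDimensional K V] [Fintype ι] {s : Set V} {v : ι → V}
    (hli : LinearIndependent K v) (hvs : ∀ a, v a ∈ s)
    (hdim : finrank K (span K s) ≤ Fintype.card ι) : s ⊆ span K (Set.range v) := by
  have hle : span K (Set.range v) ≤ span K s := span_mono (Set.range_subset_iff.2 hvs)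
  rw [eq_of_le_of_finrank_le hle (by rwa [finrank_span_eq_card hli])]
  exact subset_span

theorem subset_span_single_of_single_or_add_single_mem {K κ : Type*} [Field K] [Fintype κ]
    [DecidableEq κ] {s : Set (κ → K)} {P : κ → Prop} [DecidablePred P] {p : κ} (hp : ¬P p)
    (hs : ∀ ℓ, P ℓ → Pi.single ℓ 1 ∈ s ∨ Pi.single ℓ 1 + Pi.single p 1 ∈ s)
    (hdim : finrank K (span K s) ≤ Fintype.card {ℓ // P ℓ}) :
    s ⊆ span K ({Pi.single p 1} ∪ {v : κ → K | ∃ ℓ, P ℓ ∧ v = Pi.single ℓ 1}) := by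
  classical
  set U : Set (κ → K) := {Pi.single p 1} ∪ {v | ∃ ℓ, P ℓ ∧ v = Pi.single ℓ 1}
  set v : {ℓ // P ℓ} → κ → K := fun ℓ =>
    if Pi.single ℓ.1 1 ∈ s then Pi.single ℓ.1 1 else Pi.single ℓ.1 1 + Pi.single p 1
  have hvs : ∀ ℓ, v ℓ ∈ s := fun ℓ => by
    by_cases h : Pi.single ℓ.1 (1 : K) ∈ s
    · simp only [v, if_pos h, h]
    · simpa only [v, if_neg h] using (hs ℓ.1 ℓ.2).resolve_left h
  have hli : LinearIndependent K v := by
    refine linearIndependent_of_apply_eq_ite Subtype.val fun ℓ ℓ' => ?_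
    have hℓ' : ℓ'.1 ≠ p := fun h => hp (h ▸ ℓ'.2)
    by_cases h : Pi.single ℓ.1 (1 : K) ∈ s <;> simp [v, h, hℓ', Pi.single_apply, Subtype.ext_iff]
  have hvU : ∀ ℓ, v ℓ ∈ span K U := fun ℓ => by
    have hℓ : Pi.single ℓ.1 1 ∈ span K U := subset_span (Or.inr ⟨ℓ.1, ℓ.2, rfl⟩)
    by_cases h : Pi.single ℓ.1 (1 : K) ∈ s
    · simpa only [v, if_pos h] using hℓ
    · simpa only [v, if_neg h] using add_mem hℓ (subset_span (Or.inl rfl))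
  exact (subset_span_range_of_finrank_le hli hvs hdim).trans
    (span_le.2 (Set.range_subset_iff.2 hvU))

lemma neg_one_pow_val_add {R : Type*} [Ring R] (a b : ZMod 2) :
    (-1 : R) ^ (a + b).val = (-1) ^ a.val * (-1) ^ b.val := by
  rw [← pow_add, ZMod.val_add, ← neg_one_pow_eq_pow_mod_two]

lemma one_add_neg_one_pow_val_mul (a b : ZMod 2) :
    1 + (-1 : ℝ) ^ b.val * (-1) ^ a.val = if a = b then 2 else 0 := by
  have h01 : ∀ a : ZMod 2, a = 0 ∨ a = 1 := by decide
  rcases h01 a with rfl | rfl <;> rcases h01 b with rfl | rfl <;> norm_num [ZMod.val_one]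

section Fourier

variable {n : ℕ}

noncomputable def walsh (S x : Fin n → ZMod 2) : ℝ := (-1) ^ (S ⬝ᵥ x).val

lemma neg_one_pow_sum_val_mul_val (S x : Fin n → ZMod 2) :
    (-1 : ℝ) ^ (∑ i, (S i).val * (x i).val) = walsh S x := by
  have hdot : S ⬝ᵥ x = ((∑ i, (S i).val * (x i).val : ℕ) : ZMod 2) := by
    push_cast [ZMod.natCast_val, ZMod.cast_id', id]
    rfl
  rw [walsh, hdot, ZMod.val_natCast, ← neg_one_pow_eq_pow_mod_two]

lemma fCoeff_eq_sum_walsh (f : (Fin n → ZMod 2) → ℝ) (S : Fin n → ZMod 2) :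
    fCoeff f S = 1 / 2 ^ n * ∑ x, f x * walsh S x := by
  simp only [fCoeff, neg_one_pow_sum_val_mul_val]

lemma walsh_comm (S x : Fin n → ZMod 2) : walsh S x = walsh x S := by
  rw [walsh, walsh, dotProduct_comm]

lemma walsh_add_left (S T x : Fin n → ZMod 2) : walsh (S + T) x = walsh S x * walsh T x := by
  rw [walsh, add_dotProduct, neg_one_pow_val_add, walsh, walsh]

lemma walsh_add_right (S x y : Fin n → ZMod 2) : walsh S (x + y) = walsh S x * walsh S y := by
  rw [walsh_comm, walsh_add_left, walsh_comm x, walsh_comm y]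

lemma walsh_single_left (i : Fin n) (x : Fin n → ZMod 2) :
    walsh (Pi.single i 1) x = (-1) ^ (x i).val := by
  rw [walsh, single_dotProduct, one_mul]

lemma walsh_congr_right {S x y : Fin n → ZMod 2} (h : ∀ j, S j = 0 ∨ x j = y j) :
    walsh S x = walsh S y := by
  rw [walsh, walsh, dotProduct, dotProduct]
  congr 2
  refine sum_congr rfl fun j _ => ?_
  rcases h j with h | h <;> simp [h]

lemma sum_walsh (S : Fin n → ZMod 2) : ∑ x, walsh S x = if S = 0 then 2 ^ n else 0 := by
  split_ifs with hS
  · simp [hS, walsh]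
  · obtain ⟨j, hj⟩ : ∃ j, S j ≠ 0 := by
      by_contra! h
      exact hS (funext h)
    have hSj : S j = 1 := (by decide : ∀ a : ZMod 2, a ≠ 0 → a = 1) _ hj
    calc ∑ x, walsh S x = ∑ _x : Fin n → ZMod 2, (0 : ℝ) :=
          sum_eq_sum_of_add_comp_eq (Equiv.addRight (Pi.single j 1)) fun x => by
            simp [walsh_add_right, walsh_comm S (Pi.single j 1), walsh_single_left, hSj,
              ZMod.val_one]
      _ = 0 := sum_const_zero

theorem sum_fCoeff_mul_walsh (g : (Fin n → ZMod 2) → ℝ) (x : Fin n → ZMod 2) :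
    ∑ S, fCoeff g S * walsh S x = g x := by
  have hchar2 : ∀ y : Fin n → ZMod 2, y + x = 0 ↔ y = x := fun y => by
    rw [add_eq_zero_iff_eq_neg, show -x = x from funext fun i => ZMod.neg_eq_self_mod_two _]
  calc ∑ S, fCoeff g S * walsh S x
      = 1 / 2 ^ n * ∑ y, g y * ∑ S, walsh (y + x) S := by
        simp only [fCoeff_eq_sum_walsh, mul_sum, sum_mul]
        rw [sum_comm]
        refine sum_congr rfl fun y _ => sum_congr rfl fun S _ => ?_
        rw [walsh_comm (y + x), walsh_add_right]
        ring
    _ = g x := by field_simp; simp [sum_walsh, hchar2, mul_comm]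

lemma sum_comp_update (h : (Fin n → ZMod 2) → ℝ) (i : Fin n) (b : ZMod 2) :
    ∑ x, h (update x i b) = ∑ x, h x * (1 + (-1) ^ b.val * (-1) ^ (x i).val) := by
  simp only [one_add_neg_one_pow_val_mul]
  refine sum_eq_sum_of_add_comp_eq (Equiv.addRight (Pi.single i 1)) fun x => ?_
  have hflip : update (x + Pi.single i 1) i b = update x i b := by
    ext j; by_cases hj : j = i <;> simp [hj]
  have hsucc : ∀ a c : ZMod 2, a + 1 = c ↔ ¬a = c := by decide
  simp only [Equiv.coe_addRight, hflip, Pi.add_apply, Pi.single_eq_same, hsucc]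
  by_cases hx : x i = b
  · rw [if_pos hx, if_neg (not_not.2 hx), ← hx, update_eq_self]
    ring
  · have hx' : update x i b = x + Pi.single i 1 := by
      ext j; by_cases hj : j = i <;> simp [hj, ((hsucc _ _).2 hx).symm]
    rw [if_neg hx, if_pos hx, hx']
    ring

theorem fCoeff_comp_update (g : (Fin n → ZMod 2) → ℝ) {i : Fin n} (b : ZMod 2)
    {S : Fin n → ZMod 2} (hS : S i = 0) :
    fCoeff (fun x => g (update x i b)) S
      = fCoeff g S + (-1) ^ b.val * fCoeff g (S + Pi.single i 1) := by
  have hwalsh : ∀ x, walsh S (update x i b) = walsh S x := fun x =>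
    walsh_congr_right fun j => by
      by_cases hj : j = i
      · exact .inl (hj ▸ hS)
      · exact .inr (update_of_ne hj _ _)
  simp only [fCoeff_eq_sum_walsh]
  calc 1 / 2 ^ n * ∑ x, g (update x i b) * walsh S x
      = 1 / 2 ^ n * ∑ x, g (update x i b) * walsh S (update x i b) := by simp only [hwalsh]
    _ = 1 / 2 ^ n * ∑ x, g x * walsh S x * (1 + (-1) ^ b.val * (-1) ^ (x i).val) := by
        rw [sum_comp_update fun x => g x * walsh S x]
    _ = _ := by
        simp only [walsh_add_left, walsh_single_left, mul_add, sum_add_distrib, mul_sum]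
        congr 1 <;> refine sum_congr rfl fun x _ => by ring

theorem fCoeff_comp_update_ne_zero_or (g : (Fin n → ZMod 2) → ℝ) {j k : Fin n} (hjk : j ≠ k)
    (b c : ZMod 2) {S : Fin n → ZMod 2} (hSj : S j = 0) (hSk : S k = 0)
    (h : fCoeff (fun x => g (update x k c)) S ≠ 0)
    (h' : fCoeff (fun x => g (update x k c)) (S + Pi.single j 1) = 0) :
    fCoeff (fun x => g (update x j b)) S ≠ 0 ∨
      fCoeff (fun x => g (update x j b)) (S + Pi.single k 1) ≠ 0 := by
  have hSjk : (S + Pi.single j 1 : Fin n → ZMod 2) k = 0 := by simp [hSk, hjk.symm]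
  have hSkj : (S + Pi.single k 1 : Fin n → ZMod 2) j = 0 := by simp [hSj, hjk]
  rw [fCoeff_comp_update g c hSk] at h
  rw [fCoeff_comp_update g c hSjk] at h'
  rw [fCoeff_comp_update g b hSj, fCoeff_comp_update g b hSkj, add_right_comm S]
  by_contra! hc
  exact h (by linear_combination hc.1 - (-1) ^ b.val * h' + (-1) ^ c.val * hc.2)

theorem eq_of_fSupp_subset_span {g : (Fin n → ZMod 2) → ℝ} {W : Set (Fin n → ZMod 2)}
    {Q : Fin n → Prop} (hW : ∀ w ∈ W, ∀ j, Q j → w j = 0) (hg : fSupp g ⊆ span (ZMod 2) W)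
    {x y : Fin n → ZMod 2} (hxy : ∀ j, ¬Q j → x j = y j) : g x = g y := by
  rw [← sum_fCoeff_mul_walsh g x, ← sum_fCoeff_mul_walsh g y]
  refine sum_congr rfl fun S _ => ?_
  by_cases hS : fCoeff g S = 0
  · rw [hS, zero_mul, zero_mul]
  · refine congrArg _ (walsh_congr_right fun j => ?_)
    by_cases hj : Q j
    · exact .inl (apply_eq_zero_of_mem_span (fun w hw => hW w hw j hj) (hg hS))
    · exact .inr (hxy j hj)

lemma stdBasis_eq_single {n : ℕ} (j : Fin n) : stdBasis j = Pi.single j 1 := by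
  ext i
  simp [stdBasis, Pi.single_apply]

end Fourier

lemma card_subtype_le_val (r t : ℕ) : Fintype.card {ℓ : Fin r // t ≤ ℓ.val} = r - t := by
  have hlt := Fin.card_filter_val_lt (n := r) (m := t)
  have hsplit := card_filter_add_card_filter_not (s := univ) fun i : Fin r => i.val < t
  simp only [not_lt, card_univ, Fintype.card_fin] at hsplit
  rw [Fintype.card_subtype]
  omega

/-- Coordinates are 0-based: coordinate `j` of the paper is the index `j - 1 : Fin r`. -/
theorem restrict_indep_of_middle_vars_general {r : ℕ} (hr : 1 ≤ r) (t : ℕ)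
    (f : (Fin r → ZMod 2) → ℝ)
    (hdims : ∀ j : Fin r, 1 ≤ j.val → j.val < t →
      Module.finrank (ZMod 2) (Submodule.span (ZMod 2) (fSupp (restrictAt f j))) ≤ r - t)
    (hsupp1 : fSupp (restrictAt f ⟨0, hr⟩) ⊆
      ↑(Submodule.span (ZMod 2) {v | ∃ ℓ : Fin r, t ≤ ℓ.val ∧ v = stdBasis ℓ}))
    (hcoeff1 : ∀ ℓ : Fin r, t ≤ ℓ.val →
      fCoeff (restrictAt f ⟨0, hr⟩) (stdBasis ℓ) ≠ 0) :
    ∀ i : Fin r, 1 ≤ i.val → i.val < t →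
      (fSupp (restrictAt f i) ⊆
        ↑(Submodule.span (ZMod 2)
          ({stdBasis ⟨0, hr⟩} ∪ {v | ∃ ℓ : Fin r, t ≤ ℓ.val ∧ v = stdBasis ℓ}))) ∧
      (∀ x y : Fin r → ZMod 2, (∀ j : Fin r, ¬(1 ≤ j.val ∧ j.val < t) → x j = y j) →
        restrictAt f i x = restrictAt f i y) := by
  intro i hi1 hit
  simp only [stdBasis_eq_single] at hsupp1 hcoeff1 ⊢
  have hi0 : i ≠ ⟨0, hr⟩ := Fin.ne_of_val_ne (show i.val ≠ 0 by omega)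
  have hsupp : fSupp (restrictAt f i) ⊆ span (ZMod 2)
      ({Pi.single ⟨0, hr⟩ 1} ∪ {v : Fin r → ZMod 2 | ∃ ℓ, t ≤ ℓ.val ∧ v = Pi.single ℓ 1}) := by
    refine subset_span_single_of_single_or_add_single_mem (P := fun ℓ : Fin r => t ≤ ℓ.val)
      (show ¬t ≤ 0 by omega) (fun ℓ hℓ => ?_) (by rw [card_subtype_le_val]; exact hdims i hi1 hit)
    have hℓi : ℓ ≠ i := Fin.ne_of_val_ne (by omega)
    have hℓ0 : ℓ ≠ ⟨0, hr⟩ := Fin.ne_of_val_ne (show ℓ.val ≠ 0 by omega)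
    have hkill : fCoeff (restrictAt f ⟨0, hr⟩) (Pi.single ℓ 1 + Pi.single i 1) = 0 := by
      by_contra h
      have := apply_eq_zero_of_mem_span (j := i) ?_ (hsupp1 h)
      · simp [hℓi] at this
      · rintro _ ⟨ℓ', hℓ', rfl⟩
        exact Pi.single_eq_of_ne (Fin.ne_of_val_ne (by omega)) _
    exact fCoeff_comp_update_ne_zero_or f hi0 _ _ (Pi.single_eq_of_ne hℓi.symm _)
      (Pi.single_eq_of_ne hℓ0.symm _) (hcoeff1 ℓ hℓ) hkill
  refine ⟨hsupp, fun x y hxy => eq_of_fSupp_subset_span ?_ hsupp hxy⟩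
  rintro w (rfl | ⟨ℓ, hℓ, rfl⟩) j ⟨hj1, hjt⟩
  · exact Pi.single_eq_of_ne (Fin.ne_of_val_ne (show j.val ≠ 0 by omega)) _
  · exact Pi.single_eq_of_ne (Fin.ne_of_val_ne (by omega)) _

/-- Suppose `f : 𝔽₂^r → {−1,1}` is such that `f̂(e_j) ≠ 0` for all `j ∈ [r]`;
`Fdim(f^{(j)}) ≤ r − t` for `j ∈ {2,…,t}`; the Fourier support of `f^{(1)}` is contained
in `span{e_{t+1},…,e_r}`; and the Fourier coefficient of `f^{(1)}` at `e_ℓ` is nonzero for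
`ℓ ∈ {t+1,…,r}`. Then for every `i ∈ {2,…,t}`, the Fourier support of `f^{(i)}` is
contained in `span{e₁, e_{t+1},…,e_r}`; in particular `f^{(i)}` does not depend on the
variables `x₂,…,x_t`.
(Indices of coordinates are 0-based here: coordinate `1 ≤ j ≤ r` of the paper
corresponds to the Lean index `j - 1 : Fin r`.) -/
theorem restrict_indep_of_middle_vars {r : ℕ} (hr : 1 ≤ r) (t : ℕ) (ht1 : 1 ≤ t) (htr : t ≤ r)
    (f : (Fin r → ZMod 2) → ℝ) (hf : ∀ x, f x = 1 ∨ f x = -1)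
    (hcoeff : ∀ j : Fin r, fCoeff f (stdBasis j) ≠ 0)
    (hdims : ∀ j : Fin r, 1 ≤ j.val → j.val < t →
      Module.finrank (ZMod 2) (Submodule.span (ZMod 2) (fSupp (restrictAt f j))) ≤ r - t)
    (hsupp1 : fSupp (restrictAt f ⟨0, hr⟩) ⊆
      ↑(Submodule.span (ZMod 2) {v | ∃ ℓ : Fin r, t ≤ ℓ.val ∧ v = stdBasis ℓ}))
    (hcoeff1 : ∀ ℓ : Fin r, t ≤ ℓ.val →
      fCoeff (restrictAt f ⟨0, hr⟩) (stdBasis ℓ) ≠ 0) :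
    ∀ i : Fin r, 1 ≤ i.val → i.val < t →
      (fSupp (restrictAt f i) ⊆
        ↑(Submodule.span (ZMod 2)
          ({stdBasis ⟨0, hr⟩} ∪ {v | ∃ ℓ : Fin r, t ≤ ℓ.val ∧ v = stdBasis ℓ}))) ∧
      (∀ x y : Fin r → ZMod 2, (∀ j : Fin r, ¬(1 ≤ j.val ∧ j.val < t) → x j = y j) →
        restrictAt f i x = restrictAt f i y) :=
  restrict_indep_of_middle_vars_general hr t f hdims hsupp1 hcoeff1
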